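/- arXiv:1705.06892 — 3 statements merged into one kernel-verified Lean document; each statement's English description precedes it below -/
import Mathlib

section
/- If D₁ ⊆ X is a polyhedral convex set and D₂ ⊆ X is a generalized polyhedral convex set, then D₁ + D₂ is a polyhedral convex set. -/
/-!
Write `D₂ = {y ∈ x₀ + W | g y ≤ β}`. A point `x` lies in `D₁ + D₂` iff some `w ∈ W` satisfies
finitely many linear inequalities in `(x, w)`. They see `w` only through the values of finitely
many functionals, that is through the image of `W` in a finite-dimensional space, which is
spanned by finitely many vectors. Hence `D₁ + D₂` is the projection of a polyhedral convex subset
of `X × ℝⁿ`, and Fourier–Motzkin elimination shows that such a projection is polyhedral.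
-/

open Pointwise

/-- A generalized polyhedral convex set: the intersection of a closed affine
subspace with finitely many closed half-spaces given by continuous linear
functionals. -/
def IsGPCS {X : Type*} [AddCommGroup X] [Module ℝ X] [TopologicalSpace X]
    (D : Set X) : Prop :=
  ∃ (p : ℕ) (f : Fin p → (X →L[ℝ] ℝ)) (α : Fin p → ℝ)
    (x₀ : X) (W : Submodule ℝ X),
    IsClosed (x₀ +ᵥ (W : Set X)) ∧
    D = {x ∈ x₀ +ᵥ (W : Set X) | ∀ i, f i x ≤ α i}

/-- A polyhedral convex set: a finite intersection of closed half-spaces. -/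
def IsPCS {X : Type*} [AddCommGroup X] [Module ℝ X] [TopologicalSpace X]
    (D : Set X) : Prop :=
  ∃ (p : ℕ) (f : Fin p → (X →L[ℝ] ℝ)) (α : Fin p → ℝ),
    D = {x | ∀ i, f i x ≤ α i}

/-- `F` is a face of the convex set `C`. -/
def IsFaceOf {X : Type*} [AddCommGroup X] [Module ℝ X] (F C : Set X) : Prop :=
  Convex ℝ F ∧ F ⊆ C ∧
    ∀ ⦃x y : X⦄, x ∈ C → y ∈ C → ∀ t : ℝ, 0 < t → t < 1 →
      (1 - t) • x + t • y ∈ F → x ∈ F ∧ y ∈ F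

open Matrix

theorem Set.Finite.exists_between_of_forall_le {α : Type*} [ConditionallyCompleteLattice α]
    [Nonempty α] {L U : Set α} (hL : L.Finite) (hU : U.Finite) (h : ∀ l ∈ L, ∀ u ∈ U, l ≤ u) :
    (upperBounds L ∩ lowerBounds U).Nonempty := by
  rcases L.eq_empty_or_nonempty with rfl | hne
  · rw [upperBounds_empty, Set.univ_inter]
    exact hU.bddBelow
  · exact ⟨sSup L, fun l hl => le_csSup hL.bddAbove hl,
      fun u hu => csSup_le hne fun l hl => h l hl u hu⟩

theorem exists_forall_mul_le_iff {ι : Type*} [Finite ι] (c a : ι → ℝ) :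
    (∃ s, ∀ i, c i * s ≤ a i) ↔
      (∀ i, c i = 0 → 0 ≤ a i) ∧ ∀ i j, 0 < c i → c j < 0 → c j * a i ≤ c i * a j := by
  constructor
  · rintro ⟨s, hs⟩
    refine ⟨fun i hi => by simpa [hi] using hs i, fun i j hi hj => ?_⟩
    nlinarith [hs i, hs j]
  · rintro ⟨hzero, hpair⟩
    obtain ⟨s, hlower, hupper⟩ := Set.Finite.exists_between_of_forall_le
      ((Set.toFinite {j | c j < 0}).image fun j => a j / c j)
      ((Set.toFinite {i | 0 < c i}).image fun i => a i / c i) (by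
        rintro _ ⟨j, hj, rfl⟩ _ ⟨i, hi, rfl⟩
        rw [div_le_iff_of_neg hj, div_mul_eq_mul_div, div_le_iff₀ hi]
        linarith [hpair i j hi hj])
    refine ⟨s, fun i => ?_⟩
    rcases lt_trichotomy (c i) 0 with hi | hi | hi
    · exact (div_le_iff_of_neg' hi).mp (hlower ⟨i, hi, rfl⟩)
    · simpa [hi] using hzero i hi
    · exact (le_div_iff₀' hi).mp (hupper ⟨i, hi, rfl⟩)

section ProjPCS

variable {X : Type*} [AddCommGroup X] [Module ℝ X] [TopologicalSpace X]

theorem isPCS_setOf_forall_le {ι : Type} [Finite ι] (f : ι → X →L[ℝ] ℝ) (α : ι → ℝ) :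
    IsPCS {x | ∀ i, f i x ≤ α i} := by
  refine ⟨_, f ∘ (Finite.equivFin ι).symm, α ∘ (Finite.equivFin ι).symm, ?_⟩
  ext x
  exact (Finite.equivFin ι).symm.forall_congr_right.symm

/-- `S` is the projection to `X` of a polyhedral convex subset of `X × ℝⁿ`. -/
def IsProjPCS (n : ℕ) (S : Set X) : Prop :=
  ∃ (ι : Type) (_ : Finite ι) (c : ι → Fin n → ℝ) (f : ι → X →L[ℝ] ℝ) (α : ι → ℝ),
    S = {x | ∃ t : Fin n → ℝ, ∀ i, t ⬝ᵥ c i + f i x ≤ α i}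

theorem IsProjPCS.isPCS_of_zero {S : Set X} (h : IsProjPCS 0 S) : IsPCS S := by
  obtain ⟨ι, _, c, f, α, rfl⟩ := h
  convert isPCS_setOf_forall_le f α using 1
  ext x
  simp

/-- Fourier–Motzkin elimination of `t 0`: keep the constraints in which it does not occur and
combine each constraint where its coefficient is positive with each one where it is negative. -/
theorem IsProjPCS.of_succ {n : ℕ} {S : Set X} (h : IsProjPCS (n + 1) S) : IsProjPCS n S := by
  classical
  obtain ⟨ι, _, c, f, α, rfl⟩ := h
  refine ⟨{i // c i 0 = 0} ⊕ {ij : ι × ι // 0 < c ij.1 0 ∧ c ij.2 0 < 0}, inferInstance,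
    Sum.elim (fun i => Fin.tail (c i))
      (fun ij => c ij.1.1 0 • Fin.tail (c ij.1.2) - c ij.1.2 0 • Fin.tail (c ij.1.1)),
    Sum.elim (fun i => f i) (fun ij => c ij.1.1 0 • f ij.1.2 - c ij.1.2 0 • f ij.1.1),
    Sum.elim (fun i => α i) (fun ij => c ij.1.1 0 * α ij.1.2 - c ij.1.2 0 * α ij.1.1), ?_⟩
  ext x
  simp only [Set.mem_ofPred_eq, Fin.exists_fin_succ_pi]
  rw [exists_comm]
  refine exists_congr fun t => ?_
  have hsplit : ∀ s i, Fin.cons s t ⬝ᵥ c i + f i x ≤ α i ↔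
      c i 0 * s ≤ α i - t ⬝ᵥ Fin.tail (c i) - f i x := fun s i => by
    rw [show Fin.cons s t ⬝ᵥ c i = s * c i 0 + t ⬝ᵥ Fin.tail (c i) from cons_dotProduct s t (c i)]
    constructor <;> intro <;> linarith
  simp only [hsplit, exists_forall_mul_le_iff, Sum.forall, Subtype.forall, Prod.forall, and_imp,
    Sum.elim_inl, Sum.elim_inr, dotProduct_sub, dotProduct_smul, _root_.sub_apply,
    _root_.smul_apply, smul_eq_mul]
  refine and_congr (forall₂_congr fun i _ => ?_) (forall₄_congr fun i j _ _ => ?_) <;>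
    constructor <;> intro <;> linarith

theorem IsProjPCS.isPCS {n : ℕ} {S : Set X} (h : IsProjPCS n S) : IsPCS S := by
  induction n with
  | zero => exact h.isPCS_of_zero
  | succ n ih => exact ih h.of_succ

theorem exists_isProjPCS_setOf_exists_mem {ι : Type} [Finite ι] (W : Submodule ℝ X)
    (ℓ : ι → X →ₗ[ℝ] ℝ) (f : ι → X →L[ℝ] ℝ) (α : ι → ℝ) :
    ∃ n, IsProjPCS n {x | ∃ w ∈ W, ∀ i, ℓ i w + f i x ≤ α i} := by
  obtain ⟨n, b, hb⟩ := Submodule.fg_iff_exists_fin_generating_family.mp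
    (IsNoetherian.noetherian (W.map (LinearMap.pi ℓ)))
  refine ⟨n, ι, ‹_›, fun i k => b k i, f, α, ?_⟩
  ext x
  have hmem : ∀ m, m ∈ W.map (LinearMap.pi ℓ) ↔ ∃ t : Fin n → ℝ, ∑ k, t k • b k = m := by
    rw [← hb]
    exact fun m => Submodule.mem_span_range_iff_exists_fun ℝ
  calc (∃ w ∈ W, ∀ i, ℓ i w + f i x ≤ α i)
      ↔ ∃ m ∈ W.map (LinearMap.pi ℓ), ∀ i, m i + f i x ≤ α i := by simp
    _ ↔ _ := by simp [hmem, dotProduct, Finset.sum_apply]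

end ProjPCS

theorem mem_add_sep_vadd_iff {X : Type*} [AddCommGroup X] {S V : Set X} {P : X → Prop}
    {x₀ x : X} : x ∈ S + {y ∈ x₀ +ᵥ V | P y} ↔ ∃ w ∈ V, x - (x₀ + w) ∈ S ∧ P (x₀ + w) := by
  simp only [Set.mem_add, Set.mem_vadd_set, vadd_eq_add]
  constructor
  · rintro ⟨d, hd, _, ⟨⟨w, hw, rfl⟩, hP⟩, rfl⟩
    exact ⟨w, hw, by rwa [add_sub_cancel_right], hP⟩
  · rintro ⟨w, hw, hS, hP⟩
    exact ⟨_, hS, _, ⟨⟨w, hw, rfl⟩, hP⟩, sub_add_cancel _ _⟩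

theorem pcs_add_gpcs_isPCS_general {X : Type*} [AddCommGroup X] [Module ℝ X] [TopologicalSpace X]
    (D₁ D₂ : Set X) (h₁ : IsPCS D₁) (h₂ : IsGPCS D₂) :
    IsPCS (D₁ + D₂) := by
  obtain ⟨p, f, α, rfl⟩ := h₁
  obtain ⟨q, g, β, x₀, W, -, rfl⟩ := h₂
  obtain ⟨n, hn⟩ := exists_isProjPCS_setOf_exists_mem W
    (fun i => ((Sum.elim g (-f) i : X →L[ℝ] ℝ) : X →ₗ[ℝ] ℝ)) (Sum.elim 0 f)
    (Sum.elim (fun j => β j - g j x₀) (fun i => α i + f i x₀))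
  convert hn.isPCS using 1
  ext x
  simp only [mem_add_sep_vadd_iff, SetLike.mem_coe, Set.mem_ofPred_eq, Sum.forall, Sum.elim_inl,
    Sum.elim_inr, ContinuousLinearMap.coe_coe, Pi.zero_apply, Pi.neg_apply, _root_.zero_apply,
    _root_.neg_apply, map_sub, map_add]
  refine exists_congr fun w => and_congr_right fun _ => and_comm.trans <|
    and_congr (forall_congr' fun j => ?_) (forall_congr' fun i => ?_) <;>
    constructor <;> intro <;> linarith

/-- The Minkowski sum of a polyhedral convex set and a generalized polyhedral
convex set is a polyhedral convex set. -/
theorem pcs_add_gpcs_isPCS {X : Type*} [AddCommGroup X] [Module ℝ X] [TopologicalSpace X]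
    [IsTopologicalAddGroup X] [ContinuousSMul ℝ X] [LocallyConvexSpace ℝ X] [T2Space X]
    (D₁ D₂ : Set X) (h₁ : IsPCS D₁) (h₂ : IsGPCS D₂) :
    IsPCS (D₁ + D₂) :=
  pcs_add_gpcs_isPCS_general D₁ D₂ h₁ h₂
end

section
/- A nonempty subset D ⊆ X is polyhedral convex if and only if there exist finitely many points u₁,...,u_k, directions v₁,...,v_ℓ in X, and a closed linear subspace X₀ ⊆ X of finite codimension, such that D = conv{u₁,...,u_k} + cone{v₁,...,v_ℓ} + X₀. -/
open Pointwise

/-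
A polyhedral set `{x | ∀ i, f i x ≤ α i}` is the preimage of a polyhedron in the quotient of `X`
by the closed subspace `⋂ i, ker (f i)`, which has finite codimension. Conversely
`conv u + cone v + X₀` is the preimage of `conv (π ∘ u) + cone (π ∘ v)` under the quotient map
`π : X → X ⧸ X₀`, and linear functionals on the finite-dimensional Hausdorff space `X ⧸ X₀` are
continuous. Both directions therefore reduce to the Minkowski–Weyl theorem in finite dimensions.

For cones, Weyl's half (a finitely generated cone is cut out by finitely many half-spaces) follows
by Fourier–Motzkin elimination, adding one generator at a time, and Minkowski's half follows from
Weyl's by duality. Polyhedra reduce to cones by homogenization: the cone generated by the points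
`(u, 1)` and `(w, 0)` of `V × ℝ` meets the hyperplane at height `1` in `conv u + cone w`.
-/

open Set PointedCone

namespace PointedCone

variable {𝕜 M N : Type*} [Field 𝕜] [LinearOrder 𝕜] [IsStrictOrderedRing 𝕜]
  [AddCommGroup M] [Module 𝕜 M] [AddCommGroup N] [Module 𝕜 N] {p : M →ₗ[𝕜] N →ₗ[𝕜] 𝕜}

lemma hull_image (f : M →ₗ[𝕜] N) (s : Set M) : hull 𝕜 (f '' s) = (hull 𝕜 s).map f :=
  Submodule.span_image (f.restrictScalars _)

lemma coe_hull_range {ι : Type*} [Fintype ι] (v : ι → M) :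
    (hull 𝕜 (range v) : Set M) = {x | ∃ μ : ι → 𝕜, (∀ j, 0 ≤ μ j) ∧ x = ∑ j, μ j • v j} := by
  ext x
  simp only [SetLike.mem_coe, Submodule.mem_span_range_iff_exists_fun, mem_ofPred_eq]
  constructor
  · rintro ⟨c, rfl⟩
    exact ⟨fun j => c j, fun j => (c j).2, by simp [Nonneg.coe_smul]⟩
  · rintro ⟨μ, hμ, rfl⟩
    exact ⟨fun j => ⟨μ j, hμ j⟩, by simp [Nonneg.mk_smul]⟩

variable (p) in
/-- Fourier–Motzkin elimination of `t` from the system `0 ≤ t`, `0 ≤ p x (y - t • d)` (`x ∈ s`):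
an upper bound on `t` (`0 < p x d`) combined with `0 ≤ t` gives `x` itself, as does a constraint
not involving `t`, and combined with a lower bound (`p ψ d < 0`) it gives the positive combination
of `x` and `ψ` in which `t` cancels. -/
def fourierMotzkin (s : Set M) (d : N) : Set M :=
  {x ∈ s | 0 ≤ p x d} ∪
    (fun q : M × M => p q.1 d • q.2 - p q.2 d • q.1) '' ({x ∈ s | 0 < p x d} ×ˢ {x ∈ s | p x d < 0})

lemma fourierMotzkin_subset (s : Set M) (d : N) :
    fourierMotzkin p s d ⊆ hull 𝕜 s ∩ {x | 0 ≤ p x d} := by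
  rintro _ (⟨hx, hxd⟩ | ⟨⟨φ, ψ⟩, ⟨⟨hφ, hφd⟩, ⟨hψ, hψd⟩⟩, rfl⟩)
  · exact ⟨subset_hull hx, hxd⟩
  dsimp only at hφd hψd ⊢
  refine ⟨?_, le_of_eq ?_⟩
  · rw [sub_eq_add_neg, ← neg_smul]
    exact add_mem (smul_mem _ hφd.le (subset_hull hψ)) (smul_mem _ (by linarith) (subset_hull hφ))
  · simp only [map_sub, map_smul, LinearMap.sub_apply, LinearMap.smul_apply, smul_eq_mul]
    ring

lemma sup_hull_singleton_le_dual_fourierMotzkin (s : Set M) (d : N) :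
    dual p s ⊔ hull 𝕜 {d} ≤ dual p (fourierMotzkin p s d) := by
  intro y hy
  obtain ⟨c, hc, _, ht, rfl⟩ := Submodule.mem_sup.mp hy
  obtain ⟨t, rfl⟩ := Submodule.mem_span_singleton.mp ht
  intro x hx
  obtain ⟨hxs, hxd⟩ := fourierMotzkin_subset s d hx
  rw [← dual_hull] at hc
  rw [map_add, ← Nonneg.coe_smul, map_smul, smul_eq_mul]
  exact add_nonneg (hc hxs) (mul_nonneg t.2 hxd)

lemma dual_fourierMotzkin_le {s : Set M} (hs : s.Finite) (d : N) :
    dual p (fourierMotzkin p s d) ≤ dual p s ⊔ hull 𝕜 {d} := by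
  intro y hy
  -- take `t` to be the largest lower bound
  obtain ⟨t, ht, hmax⟩ := exists_max_image
    (insert 0 ((fun ψ => p ψ y / p ψ d) '' {ψ ∈ s | p ψ d < 0})) id
    (((hs.sep _).image _).insert 0) (insert_nonempty _ _)
  have ht₀ : 0 ≤ t := hmax 0 (mem_insert _ _)
  have key : ∀ x ∈ s, t * p x d ≤ p x y := by
    intro x hx
    rcases lt_trichotomy (p x d) 0 with hxd | hxd | hxd
    · rw [← div_le_iff_of_neg hxd]
      exact hmax _ (mem_insert_of_mem _ ⟨x, ⟨hx, hxd⟩, rfl⟩)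
    · simpa [hxd] using hy (Or.inl ⟨hx, hxd.ge⟩)
    rcases ht with rfl | ⟨ψ, ⟨hψ, hψd⟩, rfl⟩
    · simpa using hy (Or.inl ⟨hx, hxd.le⟩)
    have hxψ := hy (Or.inr ⟨(x, ψ), ⟨⟨hx, hxd⟩, ⟨hψ, hψd⟩⟩, rfl⟩)
    simp only [map_sub, map_smul, LinearMap.sub_apply, LinearMap.smul_apply,
      smul_eq_mul] at hxψ
    rw [div_mul_eq_mul_div, div_le_iff_of_neg hψd]
    linarith
  refine Submodule.mem_sup.mpr ⟨y - t • d, fun x hx => ?_, (⟨t, ht₀⟩ : {c : 𝕜 // 0 ≤ c}) • d,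
    Submodule.smul_mem _ _ (Submodule.mem_span_singleton_self d), ?_⟩
  · simpa [sub_nonneg] using key x hx
  · simp [Nonneg.mk_smul]

lemma DualFG.sup_hull_singleton {C : PointedCone 𝕜 N} (hC : C.DualFG p) (d : N) :
    (C ⊔ hull 𝕜 {d}).DualFG p := by
  obtain ⟨s, rfl⟩ := hC
  have hs := s.finite_toSet
  rw [le_antisymm (sup_hull_singleton_le_dual_fourierMotzkin _ d) (dual_fourierMotzkin_le hs d)]
  exact DualFG.dual_of_finite p ((hs.sep _).union (((hs.sep _).prod (hs.sep _)).image _))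

/-- **Weyl's theorem**. -/
theorem FG.dualFG (hbot : (⊥ : PointedCone 𝕜 N).DualFG p) {C : PointedCone 𝕜 N} (hC : C.FG) :
    C.DualFG p := by
  obtain ⟨s, hs, rfl⟩ := Submodule.fg_def.mp hC
  clear hC
  induction s, hs using Set.Finite.induction_on with
  | empty => rwa [Submodule.span_empty]
  | insert _ _ ih => rw [Submodule.span_insert, sup_comm]; exact ih.sup_hull_singleton _

/-- **Minkowski's theorem**: Weyl's theorem for the flipped pairing writes `hull 𝕜 s` as
`dual p.flip t`, and then `dual p s = hull 𝕜 t`. -/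
theorem DualFG.fg (hbot : (⊥ : PointedCone 𝕜 N).DualFG p)
    (hbot' : (⊥ : PointedCone 𝕜 M).DualFG p.flip) {C : PointedCone 𝕜 N} (hC : C.DualFG p) :
    C.FG := by
  obtain ⟨s, rfl⟩ := hC
  obtain ⟨t, ht⟩ : ∃ t : Finset N, dual p.flip t = hull 𝕜 (s : Set M) :=
    FG.dualFG hbot' (Submodule.fg_span s.finite_toSet)
  obtain ⟨r, hr⟩ : ∃ r : Finset M, dual p r = hull 𝕜 (t : Set N) :=
    FG.dualFG hbot (Submodule.fg_span t.finite_toSet)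
  suffices hull 𝕜 (t : Set N) = dual p s from this ▸ Submodule.fg_span t.finite_toSet
  have hst : (s : Set M) ⊆ dual p.flip t := ht ▸ subset_hull
  have hrs : (r : Set M) ⊆ (hull 𝕜 (s : Set M) : Set M) := by
    rw [← ht]
    exact fun z hz y hy => (hr ▸ subset_hull hy : y ∈ dual p r) hz
  refine le_antisymm (Submodule.span_le.mpr fun y hy x hx => hst hx hy) ?_
  calc dual p s = dual p (hull 𝕜 (s : Set M) : Set M) := (dual_hull _).symm
    _ ≤ dual p r := dual_anti hrs
    _ = hull 𝕜 t := hr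

lemma dualFG_bot_of_forall_eq_zero {s : Set M} (hs : s.Finite)
    (h : ∀ y, (∀ x ∈ s, p x y = 0) → y = 0) : (⊥ : PointedCone 𝕜 N).DualFG p := by
  refine ⟨(hs.union hs.neg).toFinset, le_antisymm (fun y hy => ?_) bot_le⟩
  rw [Finite.coe_toFinset] at hy
  refine (Submodule.mem_bot _).mpr (h y fun x hx => le_antisymm ?_ (hy (Or.inl hx)))
  simpa using hy (Or.inr (show -x ∈ -s by simpa using hx))

section FiniteDimensional

variable {V : Type*} [AddCommGroup V] [Module 𝕜 V] [FiniteDimensional 𝕜 V]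

lemma dualFG_bot_id : (⊥ : PointedCone 𝕜 V).DualFG .id := by
  let b := Module.finBasis 𝕜 V
  exact dualFG_bot_of_forall_eq_zero (finite_range b.coord)
    (by simpa using fun y => (b.forall_coord_eq_zero_iff (x := y)).mp)

lemma dualFG_bot_id_flip : (⊥ : PointedCone 𝕜 (Module.Dual 𝕜 V)).DualFG LinearMap.id.flip := by
  let b := Module.finBasis 𝕜 V
  exact dualFG_bot_of_forall_eq_zero (finite_range b)
    (by simpa using fun φ hφ => b.ext fun i => by simpa using hφ i)

theorem fg_iff_dualFG {C : PointedCone 𝕜 V} : C.FG ↔ C.DualFG .id :=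
  ⟨FG.dualFG dualFG_bot_id, DualFG.fg dualFG_bot_id dualFG_bot_id_flip⟩

end FiniteDimensional

end PointedCone

section Homogenization

variable {𝕜 V : Type*} [Field 𝕜] [LinearOrder 𝕜] [IsStrictOrderedRing 𝕜]
  [AddCommGroup V] [Module 𝕜 V]

lemma fst_mem_convexHull_of_mem_hull {U : Set V} {z : V × 𝕜}
    (hz : z ∈ hull 𝕜 ((·, (1 : 𝕜)) '' U)) (hz₁ : z.2 = 1) : z.1 ∈ convexHull 𝕜 U := by
  have hK := (convex_convexHull 𝕜 U).prod (convex_singleton (1 : 𝕜))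
  have key : ∀ z ∈ hull 𝕜 ((·, (1 : 𝕜)) '' U),
      z = 0 ∨ z ∈ ConvexCone.hull 𝕜 (convexHull 𝕜 U ×ˢ {1}) := by
    intro z hz
    induction hz using Submodule.span_induction with
    | mem _ hx =>
      obtain ⟨u, hu, rfl⟩ := hx
      exact Or.inr (ConvexCone.subset_hull ⟨subset_convexHull 𝕜 U hu, rfl⟩)
    | zero => exact Or.inl rfl
    | add _ _ _ _ hx hy =>
      rcases hx with rfl | hx
      · simpa using hy
      rcases hy with rfl | hy
      · simpa using Or.inr hx
      exact Or.inr (add_mem hx hy)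
    | smul c _ _ hx =>
      rw [← Nonneg.coe_smul]
      rcases c.2.eq_or_lt with hc | hc
      · left; rw [← hc, zero_smul]
      rcases hx with rfl | hx
      · simp
      exact Or.inr ((ConvexCone.hull 𝕜 _).smul_mem hc hx)
  obtain ⟨r, -, y, ⟨hy, hy₁⟩, rfl⟩ := (ConvexCone.mem_hull_of_convex hK).mp
    ((key z hz).resolve_left fun h => by simp [h] at hz₁)
  obtain rfl : r = 1 := by simpa [mem_singleton_iff.mp hy₁] using hz₁
  simpa using hy

lemma prodMk_one_mem_hull_iff {U W : Set V} {x : V} :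
    (x, (1 : 𝕜)) ∈ hull 𝕜 ((·, (1 : 𝕜)) '' U ∪ (·, (0 : 𝕜)) '' W) ↔
      x ∈ convexHull 𝕜 U + hull 𝕜 W := by
  rw [hull, Submodule.span_union, Submodule.mem_sup, ← hull, ← hull,
    show (·, (0 : 𝕜)) '' W = LinearMap.inl 𝕜 V 𝕜 '' W from rfl, hull_image]
  constructor
  · rintro ⟨a, ha, _, ⟨w, hw, rfl⟩, hab⟩
    obtain ⟨rfl, ha₂⟩ : a.1 + w = x ∧ a.2 = 1 := by simpa [Prod.ext_iff] using hab
    exact ⟨a.1, fst_mem_convexHull_of_mem_hull ha ha₂, w, hw, rfl⟩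
  · rintro ⟨a, ha, w, hw, rfl⟩
    refine ⟨(a, 1), ?_, (w, 0), ⟨w, hw, rfl⟩, by simp⟩
    have hconv : Convex 𝕜 {a : V | (a, (1 : 𝕜)) ∈ hull 𝕜 ((·, (1 : 𝕜)) '' U)} := by
      intro a₁ h₁ a₂ h₂ θ η hθ hη hθη
      convert add_mem ((hull 𝕜 _).smul_mem hθ h₁) ((hull 𝕜 _).smul_mem hη h₂) using 1
      simp [hθη]
    refine convexHull_min (fun u hu => ?_) hconv ha
    exact subset_hull (mem_image_of_mem (·, (1 : 𝕜)) hu)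

lemma hull_eq_hull_image_prodMk_one_union {G : Set (V × 𝕜)} (hG : ∀ g ∈ G, 0 ≤ g.2) :
    hull 𝕜 G = hull 𝕜 ((·, (1 : 𝕜)) '' ((fun g => g.2⁻¹ • g.1) '' {g ∈ G | 0 < g.2}) ∪
      (·, (0 : 𝕜)) '' (Prod.fst '' {g ∈ G | g.2 = 0})) := by
  apply le_antisymm <;> rw [hull, Submodule.span_le]
  · intro g hg
    rcases (hG g hg).eq_or_lt with h | h
    · exact subset_hull (Or.inr ⟨g.1, ⟨g, ⟨hg, h.symm⟩, rfl⟩, by simp [h]⟩)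
    · have hg' : g = g.2 • (g.2⁻¹ • g.1, (1 : 𝕜)) := by ext <;> simp [smul_smul, h.ne']
      rw [SetLike.mem_coe, hg']
      exact (hull 𝕜 _).smul_mem h.le
        (subset_hull (Or.inl (mem_image_of_mem _ (mem_image_of_mem _ ⟨hg, h⟩))))
  · rintro _ (⟨_, ⟨g, ⟨hg, h⟩, rfl⟩, rfl⟩ | ⟨_, ⟨g, ⟨hg, h⟩, rfl⟩, rfl⟩)
    · have hg' : (g.2⁻¹ • g.1, (1 : 𝕜)) = g.2⁻¹ • g := by ext <;> simp [h.ne']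
      simp only [SetLike.mem_coe, hg']
      exact (hull 𝕜 G).smul_mem (inv_nonneg.mpr h.le) (subset_hull hg)
    · convert subset_hull (R := 𝕜) hg
      simp [Prod.ext_iff, h]

variable (𝕜) in
def IsPolyhedron (A : Set V) : Prop :=
  ∃ S : Set (Module.Dual 𝕜 V × 𝕜), S.Finite ∧ A = {x | ∀ c ∈ S, c.1 x ≤ c.2}

variable [FiniteDimensional 𝕜 V]

theorem isPolyhedron_convexHull_add_hull {U W : Set V} (hU : U.Finite) (hW : W.Finite) :
    IsPolyhedron 𝕜 (convexHull 𝕜 U + (hull 𝕜 W : Set V)) := by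
  have hK : (hull 𝕜 ((·, (1 : 𝕜)) '' U ∪ (·, (0 : 𝕜)) '' W)).FG :=
    Submodule.fg_span ((hU.image _).union (hW.image _))
  obtain ⟨T, hT⟩ := fg_iff_dualFG.mp hK
  refine ⟨(fun χ => (-χ ∘ₗ LinearMap.inl 𝕜 V 𝕜, χ (0, 1))) '' T, T.finite_toSet.image _, ?_⟩
  ext x
  rw [← prodMk_one_mem_hull_iff, mem_ofPred_eq, ← hT]
  simp only [mem_dual, forall_mem_image, LinearMap.id_apply]
  refine forall₂_congr fun χ _ => ?_
  rw [show (x, (1 : 𝕜)) = (x, 0) + (0, 1) by simp, map_add]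
  simp [neg_le_iff_add_nonneg, add_comm]

theorem IsPolyhedron.exists_eq_convexHull_add_hull {A : Set V} (hA : IsPolyhedron 𝕜 A) :
    ∃ U W : Set V, U.Finite ∧ W.Finite ∧ A = convexHull 𝕜 U + hull 𝕜 W := by
  obtain ⟨S, hS, rfl⟩ := hA
  let homogenization : Set (Module.Dual 𝕜 (V × 𝕜)) := insert (LinearMap.snd 𝕜 V 𝕜)
    ((fun c => c.2 • LinearMap.snd 𝕜 V 𝕜 - c.1 ∘ₗ LinearMap.fst 𝕜 V 𝕜) '' S)
  obtain ⟨G, hG, hGC⟩ : ∃ G, G.Finite ∧ hull 𝕜 G = dual .id homogenization :=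
    Submodule.fg_def.mp <| fg_iff_dualFG.mpr <| DualFG.dual_of_finite .id (show homogenization.Finite from (hS.image _).insert _)
  have hG₂ : ∀ g ∈ G, 0 ≤ g.2 := fun g hg =>
    (hGC ▸ subset_hull hg : g ∈ dual .id homogenization) (mem_insert _ _)
  refine ⟨_, _, (hG.sep (0 < ·.2)).image (fun g => g.2⁻¹ • g.1), (hG.sep (·.2 = 0)).image Prod.fst,
    ?_⟩
  ext x
  rw [← prodMk_one_mem_hull_iff, ← hull_eq_hull_image_prodMk_one_union hG₂, hGC]
  simp only [mem_dual, homogenization, forall_mem_insert, forall_mem_image, LinearMap.id_apply]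
  simp [sub_nonneg]

end Homogenization

lemma Set.Finite.exists_image_range_eq {α β : Type*} {f : α → β} (hf : Function.Surjective f)
    {s : Set β} (hs : s.Finite) : ∃ (k : ℕ) (u : Fin k → α), f '' range u = s := by
  obtain ⟨k, e, -, rfl⟩ := hs.fin_param
  refine ⟨k, Function.surjInv hf ∘ e, ?_⟩
  rw [← range_comp]
  exact congrArg range (funext fun i => Function.surjInv_eq hf (e i))

lemma Submodule.preimage_mkQ_image {R X : Type*} [Ring R] [AddCommGroup X] [Module R X]
    (X₀ : Submodule R X) (s : Set X) : X₀.mkQ ⁻¹' (X₀.mkQ '' s) = s + X₀ :=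
  QuotientAddGroup.preimage_image_mk_eq_add X₀.toAddSubgroup s

lemma Submodule.preimage_mkQ_convexHull_add_hull {𝕜 X : Type*} [Field 𝕜] [LinearOrder 𝕜]
    [IsStrictOrderedRing 𝕜] [AddCommGroup X] [Module 𝕜 X] (X₀ : Submodule 𝕜 X) (U W : Set X) :
    X₀.mkQ ⁻¹' (convexHull 𝕜 (X₀.mkQ '' U) + (hull 𝕜 (X₀.mkQ '' W) : Set (X ⧸ X₀))) =
      convexHull 𝕜 U + (hull 𝕜 W : Set X) + X₀ := by
  rw [← X₀.mkQ.image_convexHull, hull_image, coe_map, ← Set.image_add, preimage_mkQ_image]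

section Topology

variable {X : Type*} [AddCommGroup X] [Module ℝ X] [TopologicalSpace X]

lemma IsPCS.exists_eq_preimage_mkQ {D : Set X} (hD : IsPCS D) :
    ∃ X₀ : Submodule ℝ X, IsClosed (X₀ : Set X) ∧ FiniteDimensional ℝ (X ⧸ X₀) ∧
      ∃ P : Set (X ⧸ X₀), IsPolyhedron ℝ P ∧ D = X₀.mkQ ⁻¹' P := by
  obtain ⟨p, f, α, rfl⟩ := hD
  let φ : X →L[ℝ] Fin p → ℝ := ContinuousLinearMap.pi f
  let X₀ : Submodule ℝ X := LinearMap.ker (φ : X →ₗ[ℝ] Fin p → ℝ)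
  let φ' : X ⧸ X₀ →ₗ[ℝ] Fin p → ℝ := X₀.liftQ φ le_rfl
  refine ⟨X₀, φ.isClosed_ker, .equiv (LinearMap.quotKerEquivRange (φ : X →ₗ[ℝ] Fin p → ℝ)).symm,
    {y | ∀ i, φ' y i ≤ α i}, ⟨range fun i => (LinearMap.proj i ∘ₗ φ', α i), finite_range _, ?_⟩, ?_⟩
  · ext y
    simp
  · ext x
    simp [φ', φ]

variable [IsTopologicalAddGroup X] [ContinuousSMul ℝ X]

lemma IsPolyhedron.isPCS_preimage_mkQ {X₀ : Submodule ℝ X} (hX₀ : IsClosed (X₀ : Set X))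
    [FiniteDimensional ℝ (X ⧸ X₀)] {P : Set (X ⧸ X₀)} (hP : IsPolyhedron ℝ P) :
    IsPCS (X₀.mkQ ⁻¹' P) := by
  have : IsClosed (X₀ : Set X) := hX₀
  obtain ⟨S, hS, rfl⟩ := hP
  obtain ⟨p, e, -, rfl⟩ := hS.fin_param
  exact ⟨p, fun i => (LinearMap.toContinuousLinearMap (e i).1).comp X₀.mkQL, fun i => (e i).2,
    by ext; simp⟩

end Topology

theorem isPCS_iff_representation_general {X : Type*} [AddCommGroup X] [Module ℝ X] [TopologicalSpace X]
    [IsTopologicalAddGroup X] [ContinuousSMul ℝ X]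
    (D : Set X) :
    IsPCS D ↔
      ∃ (k ℓ : ℕ) (u : Fin k → X) (v : Fin ℓ → X) (X₀ : Submodule ℝ X),
        IsClosed (X₀ : Set X) ∧ FiniteDimensional ℝ (X ⧸ X₀) ∧
        D = convexHull ℝ (Set.range u) +
            {x | ∃ μ : Fin ℓ → ℝ, (∀ j, 0 ≤ μ j) ∧ x = ∑ j, μ j • v j} +
            (X₀ : Set X) := by
  simp_rw [← coe_hull_range]
  constructor
  · intro hD
    obtain ⟨X₀, hX₀, hfin, P, hP, rfl⟩ := hD.exists_eq_preimage_mkQ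
    obtain ⟨U, W, hU, hW, rfl⟩ := hP.exists_eq_convexHull_add_hull
    obtain ⟨k, u, rfl⟩ := hU.exists_image_range_eq X₀.mkQ_surjective
    obtain ⟨ℓ, v, rfl⟩ := hW.exists_image_range_eq X₀.mkQ_surjective
    exact ⟨k, ℓ, u, v, X₀, hX₀, hfin, X₀.preimage_mkQ_convexHull_add_hull _ _⟩
  · rintro ⟨k, ℓ, u, v, X₀, hX₀, hfin, rfl⟩
    rw [← X₀.preimage_mkQ_convexHull_add_hull]
    exact (isPolyhedron_convexHull_add_hull ((finite_range u).image _)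
      ((finite_range v).image _)).isPCS_preimage_mkQ hX₀

/-- A nonempty set is polyhedral convex iff it is the sum of a polytope, a
finitely generated cone, and a closed linear subspace of finite codimension. -/
theorem isPCS_iff_representation {X : Type*} [AddCommGroup X] [Module ℝ X] [TopologicalSpace X]
    [IsTopologicalAddGroup X] [ContinuousSMul ℝ X] [LocallyConvexSpace ℝ X] [T2Space X]
    (D : Set X) (hne : D.Nonempty) :
    IsPCS D ↔
      ∃ (k ℓ : ℕ) (u : Fin k → X) (v : Fin ℓ → X) (X₀ : Submodule ℝ X),
        IsClosed (X₀ : Set X) ∧ FiniteDimensional ℝ (X ⧸ X₀) ∧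
        D = convexHull ℝ (Set.range u) +
            {x | ∃ μ : Fin ℓ → ℝ, (∀ j, 0 ≤ μ j) ∧ x = ∑ j, μ j • v j} +
            (X₀ : Set X) :=
  isPCS_iff_representation_general D
end

section
/- If D ⊆ X is a generalized polyhedral convex set and x ∈ D, then the tangent cone T_D(x) equals cone(D − x) (so the cone generated by D − x is already closed) and T_D(x) is a generalized polyhedral convex cone. -/
open Pointwise

/-!
Write `D = {y ∈ x₀ +ᵥ W | ∀ i, fᵢ y ≤ αᵢ}` with `x ∈ D`. The cone generated by `D - x` is
`{v ∈ W | fᵢ v ≤ 0 for every constraint active at x}`: a direction `v` of this set stays in `D`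
for a small step `x + s • v`, because each inactive constraint holds with slack and there are only
finitely many of them. That set is again generalized polyhedral, hence closed.
-/

open Filter Topology

theorem eventually_nhdsGT_add_mul_le {a b c : ℝ} (hac : a ≤ c) (hb : a = c → b ≤ 0) :
    ∀ᶠ s in 𝓝[>] (0 : ℝ), a + s * b ≤ c := by
  rcases hac.lt_or_eq with hlt | heq
  · have hcont : Continuous fun s : ℝ => a + s * b := by fun_prop
    have hlim : Tendsto (fun s : ℝ => a + s * b) (𝓝[>] 0) (𝓝 a) := by
      simpa using (hcont.tendsto 0).mono_left nhdsWithin_le_nhds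
    exact (hlim.eventually_lt_const hlt).mono fun _ => le_of_lt
  · filter_upwards [self_mem_nhdsWithin] with s (hs : 0 < s)
    nlinarith [hb heq]

section Polyhedral

variable {X F ι : Type*} [AddCommGroup X] [Module ℝ X] [FunLike F X ℝ] [LinearMapClass F ℝ X ℝ]
  {f : ι → F} {α : ι → ℝ} {x₀ x : X} {W : Submodule ℝ X}

theorem sub_mem_of_mem_vadd {y : X} (hx : x ∈ x₀ +ᵥ (W : Set X)) (hy : y ∈ x₀ +ᵥ (W : Set X)) :
    y - x ∈ W := by
  rw [mem_leftAddCoset_iff] at hx hy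
  simpa using W.sub_mem hy hx

theorem add_mem_vadd {v : X} (hx : x ∈ x₀ +ᵥ (W : Set X)) (hv : v ∈ W) :
    x + v ∈ x₀ +ᵥ (W : Set X) := by
  rw [mem_leftAddCoset_iff] at hx ⊢
  simpa [add_assoc] using W.add_mem hx hv

theorem exists_pos_add_smul_mem [Finite ι]
    (hx : x ∈ {y ∈ x₀ +ᵥ (W : Set X) | ∀ i, f i y ≤ α i}) {v : X} (hvW : v ∈ W)
    (hv : ∀ i, f i x = α i → f i v ≤ 0) :
    ∃ s : ℝ, 0 < s ∧ x + s • v ∈ {y ∈ x₀ +ᵥ (W : Set X) | ∀ i, f i y ≤ α i} := by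
  have hle : ∀ᶠ s in 𝓝[>] (0 : ℝ), ∀ i, f i (x + s • v) ≤ α i :=
    eventually_all.2 fun i => by
      simpa [map_add, map_smul] using eventually_nhdsGT_add_mul_le (hx.2 i) (hv i)
  obtain ⟨s, hs, hsle⟩ := (eventually_mem_nhdsWithin.and hle).exists
  exact ⟨s, hs, add_mem_vadd hx.1 (W.smul_mem s hvW), hsle⟩

theorem cone_sub_eq_of_mem_polyhedral [Finite ι]
    (hx : x ∈ {y ∈ x₀ +ᵥ (W : Set X) | ∀ i, f i y ≤ α i}) :
    {y : X | ∃ t : ℝ, 0 ≤ t ∧ ∃ d ∈ {y ∈ x₀ +ᵥ (W : Set X) | ∀ i, f i y ≤ α i}, y = t • (d - x)} =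
      {v : X | v ∈ W ∧ ∀ i, f i x = α i → f i v ≤ 0} := by
  ext v
  constructor
  · rintro ⟨t, ht, d, hd, rfl⟩
    refine ⟨W.smul_mem t (sub_mem_of_mem_vadd hx.1 hd.1), fun i hi => ?_⟩
    have : f i (d - x) ≤ 0 := by simpa [map_sub, hi] using hd.2 i
    simpa [map_smul] using mul_nonpos_of_nonneg_of_nonpos ht this
  · rintro ⟨hvW, hv⟩
    obtain ⟨s, hs, hmem⟩ := exists_pos_add_smul_mem hx hvW hv
    exact ⟨s⁻¹, inv_nonneg.2 hs.le, x + s • v, hmem, by simp [smul_smul, hs.ne']⟩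

end Polyhedral

section Topological

variable {X : Type*} [AddCommGroup X] [Module ℝ X] [TopologicalSpace X]

theorem IsGPCS.isClosed {D : Set X} (hD : IsGPCS D) : IsClosed D := by
  obtain ⟨p, f, α, x₀, W, hA, rfl⟩ := hD
  refine hA.inter ?_
  show IsClosed {x | ∀ i, f i x ≤ α i}
  simpa only [Set.ofPred_forall] using
    isClosed_iInter fun i => isClosed_le (f i).continuous continuous_const

theorem isGPCS_submodule_inter {p : ℕ} (f : Fin p → X →L[ℝ] ℝ) (P : Fin p → Prop)
    {W : Submodule ℝ X} (hW : IsClosed (W : Set X)) :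
    IsGPCS {v : X | v ∈ W ∧ ∀ i, P i → f i v ≤ 0} := by
  classical
  refine ⟨p, fun i => if P i then f i else 0, 0, 0, W, by simpa using hW, ?_⟩
  ext v
  refine and_congr (by simp) (forall_congr' fun i => ?_)
  by_cases hi : P i <;> simp [hi]

end Topological

theorem tangentCone_gpcs_general {X : Type*} [AddCommGroup X] [Module ℝ X] [TopologicalSpace X]
    [IsTopologicalAddGroup X]
    (D : Set X) (hD : IsGPCS D) (x : X) (hx : x ∈ D) :
    closure {y : X | ∃ t : ℝ, 0 ≤ t ∧ ∃ d ∈ D, y = t • (d - x)} =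
        {y : X | ∃ t : ℝ, 0 ≤ t ∧ ∃ d ∈ D, y = t • (d - x)} ∧
      IsGPCS {y : X | ∃ t : ℝ, 0 ≤ t ∧ ∃ d ∈ D, y = t • (d - x)} := by
  obtain ⟨p, f, α, x₀, W, hA, rfl⟩ := hD
  have hW : IsClosed (W : Set X) := by simpa using hA.vadd (-x₀)
  rw [cone_sub_eq_of_mem_polyhedral hx]
  have hK := isGPCS_submodule_inter f (fun i => f i x = α i) hW
  exact ⟨hK.isClosed.closure_eq, hK⟩

/-- For a generalized polyhedral convex set $D$ and $x ∈ D$, the tangent cone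
$T_D(x)$ (the closure of the cone generated by $D - x$) equals
$\mathrm{cone}(D - x)$, which is a generalized polyhedral convex cone. -/
theorem tangentCone_gpcs {X : Type*} [AddCommGroup X] [Module ℝ X] [TopologicalSpace X]
    [IsTopologicalAddGroup X] [ContinuousSMul ℝ X] [LocallyConvexSpace ℝ X] [T2Space X]
    (D : Set X) (hD : IsGPCS D) (x : X) (hx : x ∈ D) :
    closure {y : X | ∃ t : ℝ, 0 ≤ t ∧ ∃ d ∈ D, y = t • (d - x)} =
        {y : X | ∃ t : ℝ, 0 ≤ t ∧ ∃ d ∈ D, y = t • (d - x)} ∧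
      IsGPCS {y : X | ∃ t : ℝ, 0 ≤ t ∧ ∃ d ∈ D, y = t • (d - x)} :=
  tangentCone_gpcs_general D hD x hx
end
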